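/- arXiv:2512.01168 — 4 statements merged into one kernel-verified Lean document; each statement's English description precedes it below -/
import Mathlib

section
/- Let d ≥ 1 be an integer, δ ∈ (0,1], and let a be a symmetric d×d real matrix satisfying δ|ξ|² ≤ (aξ,ξ) ≤ δ⁻¹|ξ|² for all ξ ∈ ℝᵈ. For a symmetric d×d real matrix u define {a,u} = Σ_{i,j,k,r} a^{ij} a^{kr} u_{ik} u_{jr}. Then {a,u} ≥ δ² Σ_{i,j} u_{ij}², and moreover (1−δ²)² {a,u} ≥ {a − δI, u} ≥ 0, where I is the d×d identity matrix. -/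
open MeasureTheory Metric Set
open scoped ENNReal NNReal

noncomputable section

abbrev Spc (d : ℕ) : Type := EuclideanSpace ℝ (Fin d)

abbrev Pt (d : ℕ) : Type := ℝ × Spc d

instance matrixMeasurableSpace (d : ℕ) : MeasurableSpace (Matrix (Fin d) (Fin d) ℝ) :=
  (inferInstance : MeasurableSpace (Fin d → Fin d → ℝ))

/-- Membership in `𝕊_δ`: symmetric `d×d` matrices with
`δ|ξ|² ≤ (aξ,ξ) ≤ δ⁻¹|ξ|²`. -/
def inS (d : ℕ) (δ : ℝ) (a : Matrix (Fin d) (Fin d) ℝ) : Prop :=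
  a.IsSymm ∧ ∀ ξ : Fin d → ℝ,
    δ * (∑ i, ξ i ^ 2) ≤ (∑ i, ∑ j, a i j * ξ i * ξ j) ∧
    (∑ i, ∑ j, a i j * ξ i * ξ j) ≤ δ⁻¹ * (∑ i, ξ i ^ 2)

/-- `{a,u} = a^{ij} a^{kr} u_{ik} u_{jr}`. -/
def bra (d : ℕ) (a u : Matrix (Fin d) (Fin d) ℝ) : ℝ :=
  ∑ i, ∑ j, ∑ k, ∑ r, a i j * a k r * u i k * u j r

/-- Frobenius norm of a `d×d` array. -/
def mnorm {d : ℕ} (m : Fin d → Fin d → ℝ) : ℝ :=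
  Real.sqrt (∑ i, ∑ j, m i j ^ 2)

/-- Euclidean norm of a vector given as `Fin d → ℝ`. -/
def vnorm {d : ℕ} (v : Fin d → ℝ) : ℝ :=
  Real.sqrt (∑ i, v i ^ 2)

/-- Parabolic cylinder `C_R(t,x) = (t, t+R²) × B_R(x)`. -/
def cyl (d : ℕ) (R t : ℝ) (x : Spc d) : Set (Pt d) :=
  Ioo t (t + R ^ 2) ×ˢ ball x R

/-- Time derivative `∂_t u`. -/
def Dt {d : ℕ} (u : Pt d → ℝ) (z : Pt d) : ℝ :=
  deriv (fun s => u (s, z.2)) z.1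

/-- Spatial derivative `D_i u`. -/
def Dx {d : ℕ} (i : Fin d) (u : Pt d → ℝ) (z : Pt d) : ℝ :=
  fderiv ℝ (fun y => u (z.1, y)) z.2 (EuclideanSpace.single i 1)

/-- Second spatial derivative `D_{ij} u = D_i D_j u`. -/
def Dxx {d : ℕ} (i j : Fin d) (u : Pt d → ℝ) : Pt d → ℝ :=
  Dx i (Dx j u)

/-- `u ∈ C₀^∞(ℝ^{1+d})`. -/
def CinfC {d : ℕ} (u : Pt d → ℝ) : Prop :=
  ContDiff ℝ (⊤ : ℕ∞) u ∧ HasCompactSupport u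

/-- The kernel `p_{α,k}(s,r)`. -/
def pak (d : ℕ) (α k s r : ℝ) : ℝ :=
  if 0 < s then s ^ (-((d : ℝ) + 2 - α) / 2) * Real.exp (-(r ^ 2) / (k * s)) else 0

/-- Parabolic distance to the origin `ρ(t,x) = |x| + √|t|`. -/
def prho {d : ℕ} (z : Pt d) : ℝ := ‖z.2‖ + Real.sqrt |z.1|

/-- Average of (the positive part of) `g` over `C`, valued in `ℝ≥0∞`. -/
def aveLin {d : ℕ} (C : Set (Pt d)) (g : Pt d → ℝ) : ℝ≥0∞ :=
  (volume C)⁻¹ * ∫⁻ z in C, ENNReal.ofReal (g z)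

/-- Parabolic maximal function `𝕄_β g` (for `g ≥ 0`). -/
def maxF {d : ℕ} (β : ℝ) (g : Pt d → ℝ) (z : Pt d) : ℝ≥0∞ :=
  ⨆ (ρ : ℝ) (_ : 0 < ρ) (t : ℝ) (x : Spc d) (_ : z ∈ cyl d ρ t x),
    ENNReal.ofReal (ρ ^ β) * aveLin (cyl d ρ t x) g

/-- Oscillation of a matrix-valued function over `C`. -/
def oscC {d : ℕ} (C : Set (Pt d)) (g : Pt d → Fin d → Fin d → ℝ) : ℝ :=
  ⨍ z₁ in C, ⨍ z₂ in C, mnorm (fun i j => g z₁ i j - g z₂ i j)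

/-- Mixed norm `‖f‖_{𝕃_{q,p}}` (inner integration in `t`, outer in `x`). -/
def mixedNorm {d : ℕ} (q p : ℝ) (f : Pt d → ℝ) : ℝ :=
  (∫ x : Spc d, (∫ t : ℝ, |f (t, x)| ^ q) ^ (p / q)) ^ (1 / p)

/-- Mixed norm on a set `Γ`. -/
def mixedNormOn {d : ℕ} (q p : ℝ) (Γ : Set (Pt d)) (f : Pt d → ℝ) : ℝ :=
  mixedNorm q p (Γ.indicator f)

/-- Normalized (averaged) mixed norm over the cylinder `C_R(t,x)`, in `ℝ≥0∞`. -/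
def cylNormL {d : ℕ} (q p R t : ℝ) (x : Spc d) (f : Pt d → ℝ) : ℝ≥0∞ :=
  ((volume (ball x R))⁻¹ * ∫⁻ y in ball x R,
      ((volume (Ioo t (t + R ^ 2)))⁻¹ * ∫⁻ s in Ioo t (t + R ^ 2),
        ENNReal.ofReal |f (s, y)| ^ q) ^ (p / q)) ^ (1 / p)

/-- Mixed norm on a set, valued in `ℝ≥0∞`. -/
def mixedNormLe {d : ℕ} (q p : ℝ) (Γ : Set (Pt d)) (f : Pt d → ℝ) : ℝ≥0∞ :=
  (∫⁻ x : Spc d, (∫⁻ t : ℝ, ENNReal.ofReal |Γ.indicator f (t, x)| ^ q) ^ (p / q)) ^ (1 / p)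

/-- `ã_C(t)`: average of `a(t,·)` over the ball of the cylinder. -/
def aTilde {d : ℕ} (a : Pt d → Matrix (Fin d) (Fin d) ℝ) (R : ℝ) (x₀ : Spc d) (t : ℝ)
    (i j : Fin d) : ℝ :=
  ⨍ y in ball x₀ R, a (t, y) i j

/-- The mean oscillation of `a` w.r.t. `x` over one cylinder. -/
def aSharpCyl {d : ℕ} (a : Pt d → Matrix (Fin d) (Fin d) ℝ) (R t₀ : ℝ) (x₀ : Spc d) : ℝ≥0∞ :=
  (volume (cyl d R t₀ x₀))⁻¹ * ∫⁻ z in cyl d R t₀ x₀,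
    ENNReal.ofReal (mnorm (fun i j => a z i j - aTilde a R x₀ z.1 i j))

/-- `a^♯`. -/
def aSharp {d : ℕ} (a : Pt d → Matrix (Fin d) (Fin d) ℝ) : ℝ≥0∞ :=
  ⨆ (R : ℝ) (_ : 0 < R) (t₀ : ℝ) (x₀ : Spc d), aSharpCyl a R t₀ x₀

/-- `a^♯_ρ` (only cylinders of radius `≤ ρa`). -/
def aSharpRho {d : ℕ} (a : Pt d → Matrix (Fin d) (Fin d) ℝ) (ρa : ℝ) : ℝ≥0∞ :=
  ⨆ (R : ℝ) (_ : 0 < R) (_ : R ≤ ρa) (t₀ : ℝ) (x₀ : Spc d), aSharpCyl a R t₀ x₀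

/-- Homogeneous Morrey norm `‖g‖_{Ė_{p,β}}`. -/
def morreyP {d : ℕ} (p β : ℝ) (g : Pt d → ℝ) : ℝ≥0∞ :=
  ⨆ (ρ : ℝ) (_ : 0 < ρ) (t : ℝ) (x : Spc d),
    ENNReal.ofReal (ρ ^ β) *
      ((volume (cyl d ρ t x))⁻¹ * ∫⁻ z in cyl d ρ t x, ENNReal.ofReal |g z| ^ p) ^ (1 / p)

/-- Homogeneous mixed-norm Morrey norm `‖g‖_{Ė_{q,p,β}}`. -/
def morreyQP {d : ℕ} (q p β : ℝ) (g : Pt d → ℝ) : ℝ≥0∞ :=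
  ⨆ (ρ : ℝ) (_ : 0 < ρ) (t : ℝ) (x : Spc d),
    ENNReal.ofReal (ρ ^ β) * cylNormL q p ρ t x g

/-- Inhomogeneous mixed-norm Morrey norm `‖g‖_{E_{q,p,β}}` (radii `ρ ∈ (0,1]`). -/
def morreyI {d : ℕ} (q p β : ℝ) (g : Pt d → ℝ) : ℝ≥0∞ :=
  ⨆ (ρ : ℝ) (_ : 0 < ρ) (_ : ρ ≤ 1) (t : ℝ) (x : Spc d),
    ENNReal.ofReal (ρ ^ β) * cylNormL q p ρ t x g

/-- `b̄_{q',p',ρb}` for a vector field `b`. -/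
def bBar {d : ℕ} (q' p' : ℝ) (b : Pt d → Fin d → ℝ) (ρb : ℝ) : ℝ≥0∞ :=
  ⨆ (R : ℝ) (_ : 0 < R) (_ : R ≤ ρb) (t : ℝ) (x : Spc d),
    ENNReal.ofReal R * cylNormL q' p' R t x (fun z => vnorm (b z))

/-- Test function supported in the open set `Q`. -/
def IsTest {d : ℕ} (Q : Set (Pt d)) (φ : Pt d → ℝ) : Prop :=
  ContDiff ℝ (⊤ : ℕ∞) φ ∧ HasCompactSupport φ ∧ tsupport φ ⊆ Q

/-- `ut` is the weak time derivative of `u` on `Q`. -/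
def WeakDtOn {d : ℕ} (Q : Set (Pt d)) (u ut : Pt d → ℝ) : Prop :=
  ∀ φ, IsTest Q φ → ∫ z in Q, u z * Dt φ z = - ∫ z in Q, ut z * φ z

/-- `ui` is the weak `i`-th spatial derivative of `u` on `Q`. -/
def WeakDxOn {d : ℕ} (Q : Set (Pt d)) (i : Fin d) (u ui : Pt d → ℝ) : Prop :=
  ∀ φ, IsTest Q φ → ∫ z in Q, u z * Dx i φ z = - ∫ z in Q, ui z * φ z

namespace Stmt0Aux
open Matrix
variable {d : ℕ}
lemma symm_hermitian {A : Matrix (Fin d) (Fin d) ℝ} (h : A.IsSymm) : A.IsHermitian := by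
  rwa [Matrix.IsHermitian, Matrix.conjTranspose_eq_transpose_of_trivial]

lemma quad_eq (M : Matrix (Fin d) (Fin d) ℝ) (ξ : Fin d → ℝ) :
    dotProduct ξ (M *ᵥ ξ) = ∑ i, ∑ j, M i j * ξ i * ξ j := by
  simp only [dotProduct, Matrix.mulVec, Finset.mul_sum]
  exact Finset.sum_congr rfl fun i _ => Finset.sum_congr rfl fun j _ => by ring

lemma psd_of_quad {M : Matrix (Fin d) (Fin d) ℝ} (hs : M.IsSymm)
    (h : ∀ ξ : Fin d → ℝ, 0 ≤ ∑ i, ∑ j, M i j * ξ i * ξ j) : M.PosSemidef := by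
  refine Matrix.PosSemidef.of_dotProduct_mulVec_nonneg (symm_hermitian hs) fun x => ?_
  rw [star_trivial, quad_eq]; exact h x

lemma trace_mul_transpose_nonneg (M : Matrix (Fin d) (Fin d) ℝ) :
    0 ≤ (M * Mᵀ).trace := by
  have : (M * Mᵀ).trace = ∑ i, ∑ j, (M i j)^2 := by
    simp [Matrix.trace, Matrix.mul_apply, Matrix.diag, sq]
  rw [this]; positivity

open scoped MatrixOrder in
lemma trace_quad_nonneg {a b u : Matrix (Fin d) (Fin d) ℝ}
    (hu : u.IsSymm) (ha : a.PosSemidef) (hb : b.PosSemidef) :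
    0 ≤ (a * u * b * u).trace := by
  set s := CFC.sqrt a with hs_def
  set t := CFC.sqrt b with ht_def
  have hs : s * s = a := CFC.sqrt_mul_sqrt_self a (Matrix.nonneg_iff_posSemidef.mpr ha)
  have ht : t * t = b := CFC.sqrt_mul_sqrt_self b (Matrix.nonneg_iff_posSemidef.mpr hb)
  have hsT : sᵀ = s := by
    have := (Matrix.nonneg_iff_posSemidef.mp (CFC.sqrt_nonneg a)).1
    rwa [Matrix.IsHermitian, Matrix.conjTranspose_eq_transpose_of_trivial] at this
  have htT : tᵀ = t := by
    have := (Matrix.nonneg_iff_posSemidef.mp (CFC.sqrt_nonneg b)).1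
    rwa [Matrix.IsHermitian, Matrix.conjTranspose_eq_transpose_of_trivial] at this
  have key : (a * u * b * u).trace = ((s * u * t) * (s * u * t)ᵀ).trace := by
    have hT : (s * u * t)ᵀ = t * u * s := by
      rw [Matrix.transpose_mul, Matrix.transpose_mul, hsT, htT, hu.eq, Matrix.mul_assoc]
    rw [hT, ← hs, ← ht]
    rw [show s * s * u * (t * t) * u = s * (s * u * t * (t * u)) by
      simp only [Matrix.mul_assoc]]
    rw [Matrix.trace_mul_comm]
    simp only [Matrix.mul_assoc]
  rw [key]
  exact trace_mul_transpose_nonneg _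

lemma trace_sq_sub (c b u : Matrix (Fin d) (Fin d) ℝ) :
    ((c - b) * u * (c + b) * u).trace = (c*u*c*u).trace - (b*u*b*u).trace := by
  have h1 : (c - b) * u * (c + b) * u
      = c*u*c*u + c*u*(b*u) - b*u*(c*u) - b*u*b*u := by
    simp only [Matrix.sub_mul, Matrix.mul_add, Matrix.add_mul, Matrix.mul_assoc]
    abel
  rw [h1]
  have h2 : (c*u*(b*u)).trace = (b*u*(c*u)).trace := Matrix.trace_mul_comm _ _
  simp only [Matrix.trace_sub, Matrix.trace_add, h2]
  ring

lemma bra_eq_trace (a u : Matrix (Fin d) (Fin d) ℝ)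
    (ha : a.IsSymm) (hu : u.IsSymm) :
    bra d a u = (a * u * a * u).trace := by
  have step1 : bra d a u = ∑ i, ∑ j, ∑ k, ∑ r, a i j * u j r * a r k * u k i := by
    unfold bra
    refine Finset.sum_congr rfl fun i _ => Finset.sum_congr rfl fun j _ =>
      Finset.sum_congr rfl fun k _ => Finset.sum_congr rfl fun r _ => ?_
    rw [ha.apply k r, hu.apply i k]
    ring
  have swap3 : ∀ (t : Fin d → Fin d → Fin d → ℝ),
      (∑ j, ∑ k, ∑ r, t j k r) = ∑ k, ∑ r, ∑ j, t j k r := by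
    intro t
    rw [Finset.sum_comm]
    exact Finset.sum_congr rfl fun k _ => Finset.sum_comm
  have step2 : bra d a u = ∑ i, ∑ k, ∑ r, ∑ j, a i j * u j r * a r k * u k i := by
    rw [step1]
    exact Finset.sum_congr rfl fun i _ => swap3 _
  rw [step2]
  simp only [Matrix.trace, Matrix.diag, Matrix.mul_apply, Finset.sum_mul]

lemma quad_mix (a : Matrix (Fin d) (Fin d) ℝ) (r s : ℝ) (ξ : Fin d → ℝ) :
    ∑ i, ∑ j, (r • a + s • (1 : Matrix (Fin d) (Fin d) ℝ)) i j * ξ i * ξ j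
      = r * (∑ i, ∑ j, a i j * ξ i * ξ j) + s * ∑ i, ξ i ^ 2 := by
  simp only [Matrix.add_apply, Matrix.smul_apply, Matrix.one_apply, smul_eq_mul, add_mul,
    Finset.sum_add_distrib, Finset.mul_sum]
  congr 1
  · exact Finset.sum_congr rfl fun i _ => Finset.sum_congr rfl fun j _ => by ring
  · refine Finset.sum_congr rfl fun i _ => ?_
    rw [Finset.sum_eq_single i]
    · simp [sq]; ring
    · intro j _ hj; simp [Ne.symm hj]
    · simp

lemma symm_mix {a : Matrix (Fin d) (Fin d) ℝ} (ha : a.IsSymm) (r s : ℝ) :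
    (r • a + s • (1 : Matrix (Fin d) (Fin d) ℝ)).IsSymm := by
  unfold Matrix.IsSymm at *
  rw [Matrix.transpose_add, Matrix.transpose_smul, Matrix.transpose_smul,
    Matrix.transpose_one, ha]

end Stmt0Aux

theorem stmt0 (d : ℕ) (hd : 1 ≤ d) (δ : ℝ) (hδ0 : 0 < δ) (hδ1 : δ ≤ 1)
    (a u : Matrix (Fin d) (Fin d) ℝ) (ha : inS d δ a) (hu : u.IsSymm) :
    δ ^ 2 * (∑ i, ∑ j, u i j ^ 2) ≤ bra d a u ∧
    0 ≤ bra d (a - δ • (1 : Matrix (Fin d) (Fin d) ℝ)) u ∧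
    bra d (a - δ • (1 : Matrix (Fin d) (Fin d) ℝ)) u ≤ (1 - δ ^ 2) ^ 2 * bra d a u := by
  obtain ⟨hasym, hq⟩ := ha
  have hS : ∀ ξ : Fin d → ℝ, (0:ℝ) ≤ ∑ i, ξ i ^ 2 := fun ξ => by positivity
  have eb : a - δ • (1 : Matrix (Fin d) (Fin d) ℝ)
      = (1:ℝ) • a + (-δ) • (1 : Matrix (Fin d) (Fin d) ℝ) := by module
  have eab : a + δ • (1 : Matrix (Fin d) (Fin d) ℝ)
      = (1:ℝ) • a + δ • (1 : Matrix (Fin d) (Fin d) ℝ) := by module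
  have ecb : (1 - δ^2) • a - (a - δ • (1 : Matrix (Fin d) (Fin d) ℝ))
      = (-δ^2) • a + δ • (1 : Matrix (Fin d) (Fin d) ℝ) := by module
  have ecpb : (1 - δ^2) • a + (a - δ • (1 : Matrix (Fin d) (Fin d) ℝ))
      = (2 - δ^2) • a + (-δ) • (1 : Matrix (Fin d) (Fin d) ℝ) := by module
  have psd_b : (a - δ • (1 : Matrix (Fin d) (Fin d) ℝ)).PosSemidef := by
    rw [eb]
    refine Stmt0Aux.psd_of_quad (Stmt0Aux.symm_mix hasym _ _) fun ξ => ?_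
    rw [Stmt0Aux.quad_mix]
    have := (hq ξ).1; nlinarith [hS ξ]
  have psd_ab : (a + δ • (1 : Matrix (Fin d) (Fin d) ℝ)).PosSemidef := by
    rw [eab]
    refine Stmt0Aux.psd_of_quad (Stmt0Aux.symm_mix hasym _ _) fun ξ => ?_
    rw [Stmt0Aux.quad_mix]
    have := (hq ξ).1; nlinarith [hS ξ]
  have psd_cb : ((1 - δ^2) • a - (a - δ • (1 : Matrix (Fin d) (Fin d) ℝ))).PosSemidef := by
    rw [ecb]
    refine Stmt0Aux.psd_of_quad (Stmt0Aux.symm_mix hasym _ _) fun ξ => ?_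
    rw [Stmt0Aux.quad_mix]
    have h2 := (hq ξ).2
    have hinv : δ * (δ⁻¹ * ∑ i, ξ i ^ 2) = ∑ i, ξ i ^ 2 := by
      field_simp
    nlinarith [hS ξ, mul_le_mul_of_nonneg_left h2 (le_of_lt hδ0)]
  have psd_cpb : ((1 - δ^2) • a + (a - δ • (1 : Matrix (Fin d) (Fin d) ℝ))).PosSemidef := by
    rw [ecpb]
    refine Stmt0Aux.psd_of_quad (Stmt0Aux.symm_mix hasym _ _) fun ξ => ?_
    rw [Stmt0Aux.quad_mix]
    have h1 := (hq ξ).1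
    have h2d : (0:ℝ) ≤ 2 - δ^2 := by nlinarith
    nlinarith [hS ξ, mul_le_mul_of_nonneg_left h1 h2d,
      mul_nonneg (mul_nonneg (le_of_lt hδ0) (hS ξ)) (by nlinarith : (0:ℝ) ≤ 1 - δ^2)]
  have hbsym : (a - δ • (1 : Matrix (Fin d) (Fin d) ℝ)).IsSymm := by
    rw [eb]; exact Stmt0Aux.symm_mix hasym _ _
  have hBa : bra d a u = (a*u*a*u).trace := Stmt0Aux.bra_eq_trace a u hasym hu
  have hBb : bra d (a - δ • (1 : Matrix (Fin d) (Fin d) ℝ)) u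
      = ((a - δ • (1 : Matrix (Fin d) (Fin d) ℝ))*u*(a - δ • (1 : Matrix (Fin d) (Fin d) ℝ))*u).trace :=
    Stmt0Aux.bra_eq_trace _ u hbsym hu
  have htrU : (u*u).trace = ∑ i, ∑ j, u i j ^ 2 := by
    simp only [Matrix.trace, Matrix.diag, Matrix.mul_apply, sq]
    exact Finset.sum_congr rfl fun i _ => Finset.sum_congr rfl fun j _ => by
      rw [hu.apply i j]
  have hδ1u : ((δ • (1 : Matrix (Fin d) (Fin d) ℝ)) * u * (δ • (1 : Matrix (Fin d) (Fin d) ℝ)) * u).trace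
      = δ^2 * (∑ i, ∑ j, u i j ^ 2) := by
    have : (δ • (1 : Matrix (Fin d) (Fin d) ℝ)) * u * (δ • (1 : Matrix (Fin d) (Fin d) ℝ)) * u
        = (δ^2) • (u*u) := by
      simp only [smul_mul_assoc, mul_smul_comm, Matrix.one_mul, Matrix.mul_one, smul_smul]
      congr 1; ring
    rw [this, Matrix.trace_smul, smul_eq_mul, htrU]
  have hcu : (((1 - δ^2) • a)*u*((1 - δ^2) • a)*u).trace = (1-δ^2)^2 * (a*u*a*u).trace := by
    have : ((1 - δ^2) • a)*u*((1 - δ^2) • a)*u = ((1-δ^2)^2) • (a*u*a*u) := by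
      simp only [smul_mul_assoc, mul_smul_comm, smul_smul]
      congr 1; ring
    rw [this, Matrix.trace_smul, smul_eq_mul]
  have h1 : 0 ≤ ((a - δ • (1 : Matrix (Fin d) (Fin d) ℝ)) * u * (a + δ • (1 : Matrix (Fin d) (Fin d) ℝ)) * u).trace :=
    Stmt0Aux.trace_quad_nonneg hu psd_b psd_ab
  rw [Stmt0Aux.trace_sq_sub, hδ1u] at h1
  have h2 : 0 ≤ ((a - δ • (1 : Matrix (Fin d) (Fin d) ℝ)) * u * (a - δ • (1 : Matrix (Fin d) (Fin d) ℝ)) * u).trace :=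
    Stmt0Aux.trace_quad_nonneg hu psd_b psd_b
  have h3 : 0 ≤ (((1 - δ^2) • a - (a - δ • (1 : Matrix (Fin d) (Fin d) ℝ))) * u *
      ((1 - δ^2) • a + (a - δ • (1 : Matrix (Fin d) (Fin d) ℝ))) * u).trace :=
    Stmt0Aux.trace_quad_nonneg hu psd_cb psd_cpb
  rw [Stmt0Aux.trace_sq_sub, hcu] at h3
  refine ⟨by rw [hBa]; linarith, by rw [hBb]; linarith, ?_⟩
  rw [hBb, hBa]; linarith
end
end

section
/- Let d ≥ 1, β ≥ 0, α < β, k > 0. Then there exists a constant N = N(d,α,β,k) such that for every measurable f ≥ 0 on ℝ^{1+d}, every ρ > 0, and every (t,x) ∈ C_ρ, one has P_{α,k}( 1_{(C_{2ρ})^c} f )(t,x) ≤ N ρ^{α−β} 𝕄_β f(0,0). -/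
open MeasureTheory Metric Set
open scoped ENNReal NNReal

noncomputable section

lemma aux_pow_le_exp {x : ℝ} (hx : 0 ≤ x) (m : ℕ) : x ^ m ≤ m.factorial * Real.exp x := by
  have h := Real.sum_le_exp_of_nonneg hx (m+1)
  have h2 : x ^ m / m.factorial ≤ ∑ i ∈ Finset.range (m+1), x ^ i / i.factorial :=
    Finset.single_le_sum (f := fun i => x ^ i / (i.factorial:ℝ)) (fun i _ => by positivity)
      (Finset.self_mem_range_succ m)
  have hm : (0:ℝ) < m.factorial := by positivity
  rw [div_le_iff₀ hm] at h2
  nlinarith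

lemma aux_dyadic (a : ℝ) (ha : 1 ≤ a) : ∃ n : ℕ, 2 ^ n ≤ a ∧ a < 2 ^ (n+1) := by
  have h : ∃ n : ℕ, a < 2 ^ (n+1) := by
    obtain ⟨n, hn⟩ := pow_unbounded_of_one_lt a (one_lt_two (α := ℝ))
    exact ⟨n, hn.trans_le (by gcongr <;> norm_num)⟩
  classical
  refine ⟨Nat.find h, ?_, Nat.find_spec h⟩
  rcases Nat.eq_zero_or_pos (Nat.find h) with h0 | h0
  · simpa [h0] using ha
  · have := Nat.find_min h (m := Nat.find h - 1) (by omega)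
    push_neg at this
    calc (2:ℝ) ^ (Nat.find h) = 2 ^ (Nat.find h - 1 + 1) := by congr 1; omega
      _ ≤ a := this

set_option maxHeartbeats 1000000 in
lemma pak_bound (d : ℕ) (α k : ℝ) (hk : 0 < k) :
    ∃ N₁ : ℝ, 0 < N₁ ∧ ∀ s r R : ℝ, 0 < s → 0 ≤ r → 0 < R →
      R ≤ max (Real.sqrt s) r → max (Real.sqrt s) r < 2 * R →
      pak d α k s r ≤ N₁ * R ^ (α - d - 2) := by
  set γ : ℝ := (α - d - 2) / 2 with hγ
  set m : ℕ := ⌈-γ⌉₊ with hm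
  have hfac : (0:ℝ) < m.factorial := by positivity
  refine ⟨max ((4:ℝ)^γ) 1 + k ^ m * m.factorial, by positivity, ?_⟩
  intro s r R hs hr hR hR1 hR2
  have hRpos : (0:ℝ) < R ^ 2 := by positivity
  have hRR : R ^ (α - (d:ℝ) - 2) = (R ^ 2) ^ γ := by
    rw [← Real.rpow_natCast R 2, ← Real.rpow_mul hR.le]
    congr 1
    push_cast [hγ]
    ring
  have hpak : pak d α k s r = s ^ γ * Real.exp (-(r ^ 2) / (k * s)) := by
    rw [pak, if_pos hs]
    congr 2
    rw [hγ]; ring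
  have hexp1 : Real.exp (-(r ^ 2) / (k * s)) ≤ 1 := by
    rw [Real.exp_le_one_iff]
    have h1 : 0 ≤ r ^ 2 / (k * s) := by positivity
    rw [neg_div]; linarith
  have hsγpos : (0:ℝ) < s ^ γ := Real.rpow_pos_of_pos hs γ
  rw [hpak, hRR]
  rcases le_or_gt R (Real.sqrt s) with hcase | hcase
  · have hs1 : R ^ 2 ≤ s := by nlinarith [Real.sq_sqrt hs.le, Real.sqrt_nonneg s]
    have hs2 : s < 4 * R ^ 2 := by
      have h3 : Real.sqrt s < 2 * R := lt_of_le_of_lt (le_max_left _ _) hR2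
      nlinarith [Real.sq_sqrt hs.le, Real.sqrt_nonneg s]
    have hbound : s ^ γ ≤ max ((4:ℝ)^γ) 1 * (R ^ 2) ^ γ := by
      rcases le_or_gt 0 γ with hγ0 | hγ0
      · have h5 : s ^ γ ≤ (4 * R ^ 2) ^ γ := Real.rpow_le_rpow hs.le (by nlinarith) hγ0
        rw [Real.mul_rpow (by norm_num) hRpos.le] at h5
        refine h5.trans ?_
        have h4 : (0:ℝ) < (R^2) ^ γ := Real.rpow_pos_of_pos hRpos γ
        nlinarith [le_max_left ((4:ℝ)^γ) 1]
      · have h5 : s ^ γ ≤ (R ^ 2) ^ γ := Real.rpow_le_rpow_of_nonpos hRpos hs1 hγ0.le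
        have h4 : (0:ℝ) < (R^2) ^ γ := Real.rpow_pos_of_pos hRpos γ
        nlinarith [le_max_right ((4:ℝ)^γ) 1]
    have h4 : (0:ℝ) < (R^2) ^ γ := Real.rpow_pos_of_pos hRpos γ
    nlinarith [Real.exp_pos (-(r ^ 2) / (k * s)), mul_pos (pow_pos hk m) hfac]
  · have hrR : R ≤ r := by
      rcases max_cases (Real.sqrt s) r with ⟨h1, h2⟩ | ⟨h1, h2⟩
      · linarith [hR1, h1 ▸ hR1]
      · linarith [h1 ▸ hR1]
    have hsR : s < R ^ 2 := by nlinarith [Real.sq_sqrt hs.le, Real.sqrt_nonneg s]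
    set u : ℝ := s / R ^ 2 with hu
    have hu0 : 0 < u := by positivity
    have hu1 : u < 1 := by rw [hu, div_lt_one hRpos]; exact hsR
    set x : ℝ := R ^ 2 / (k * s) with hx
    have hx0 : 0 < x := by positivity
    have hsplit : s ^ γ = (R ^ 2) ^ γ * u ^ γ := by
      rw [hu, ← Real.mul_rpow hRpos.le (by positivity)]
      congr 1
      field_simp
    have hexp2 : Real.exp (-(r ^ 2) / (k * s)) ≤ Real.exp (-x) := by
      rw [Real.exp_le_exp, hx, neg_div, neg_le_neg_iff]
      gcongr
    have huγ : u ^ γ ≤ (u⁻¹) ^ m := by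
      have h6 : -(m:ℝ) ≤ γ := by
        have := Nat.le_ceil (-γ)
        rw [← hm] at this
        linarith
      have h7 := Real.rpow_le_rpow_of_exponent_ge hu0 hu1.le h6
      rwa [Real.rpow_neg hu0.le, Real.rpow_natCast, ← inv_pow] at h7
    have hinv : u⁻¹ = k * x := by
      rw [hx, hu]
      field_simp
    have hxm : (u⁻¹) ^ m ≤ k ^ m * (m.factorial * Real.exp x) := by
      rw [hinv, mul_pow]
      exact mul_le_mul_of_nonneg_left (aux_pow_le_exp hx0.le m) (by positivity)
    have h8 : Real.exp x * Real.exp (-x) = 1 := by rw [← Real.exp_add]; simp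
    have hfinal : u ^ γ * Real.exp (-x) ≤ k ^ m * m.factorial := by
      calc u ^ γ * Real.exp (-x) ≤ (k ^ m * (m.factorial * Real.exp x)) * Real.exp (-x) :=
            mul_le_mul_of_nonneg_right (huγ.trans hxm) (Real.exp_pos _).le
        _ = k ^ m * m.factorial * (Real.exp x * Real.exp (-x)) := by ring
        _ = k ^ m * m.factorial := by rw [h8, mul_one]
    have h4 : (0:ℝ) < (R ^ 2) ^ γ := Real.rpow_pos_of_pos hRpos γ
    have huγpos : (0:ℝ) < u ^ γ := Real.rpow_pos_of_pos hu0 γ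
    calc s ^ γ * Real.exp (-(r ^ 2) / (k * s))
        = (R ^ 2) ^ γ * (u ^ γ * Real.exp (-(r ^ 2) / (k * s))) := by rw [hsplit]; ring
      _ ≤ (R ^ 2) ^ γ * (u ^ γ * Real.exp (-x)) := by
          exact mul_le_mul_of_nonneg_left (mul_le_mul_of_nonneg_left hexp2 huγpos.le) h4.le
      _ ≤ (R ^ 2) ^ γ * (k ^ m * m.factorial) :=
          mul_le_mul_of_nonneg_left hfinal h4.le
      _ = (k ^ m * m.factorial) * (R ^ 2) ^ γ := by ring
      _ ≤ (max ((4:ℝ)^γ) 1 + k ^ m * m.factorial) * (R ^ 2) ^ γ := by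
          have h9 : (0:ℝ) ≤ max ((4:ℝ)^γ) 1 := le_trans zero_le_one (le_max_right _ _)
          exact mul_le_mul_of_nonneg_right (by linarith) h4.le

lemma coeff_eq (d : ℕ) (α β ρ : ℝ) (hρ : 0 < ρ) (N₁ : ℝ) (n : ℕ) :
    N₁ * (2 ^ n * ρ) ^ (α - (d:ℝ) - 2) * ((4 * (2 ^ n * ρ)) ^ 2 *
      ((4 * (2 ^ n * ρ)) ^ d * (((4 * (2 ^ n * ρ)) ^ β)⁻¹))) =
    (N₁ * 4 ^ ((d:ℝ) + 2 - β)) * ρ ^ (α - β) * ((2:ℝ) ^ (α - β)) ^ n := by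
  have hA : (0:ℝ) < 2 ^ n * ρ := by positivity
  have h4A : (0:ℝ) < 4 * (2 ^ n * ρ) := by positivity
  have key : ∀ (y : ℝ), 0 < y → (y ^ 2 * (y ^ d * ((y ^ β)⁻¹)) : ℝ) = y ^ ((2:ℝ) + d - β) := by
    intro y hy
    rw [← Real.rpow_natCast y 2, ← Real.rpow_natCast y d, ← Real.rpow_neg hy.le,
      ← Real.rpow_add hy, ← Real.rpow_add hy]
    congr 1
    push_cast
    ring
  rw [key _ h4A, Real.mul_rpow (by norm_num) hA.le]
  have e1 : ((2:ℝ) + d - β) = ((d:ℝ) + 2 - β) := by ring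
  rw [e1]
  have e2 : N₁ * (2 ^ n * ρ) ^ (α - (d:ℝ) - 2) * ((4:ℝ) ^ ((d:ℝ) + 2 - β) * (2 ^ n * ρ) ^ ((d:ℝ) + 2 - β))
      = (N₁ * (4:ℝ) ^ ((d:ℝ) + 2 - β)) * ((2 ^ n * ρ) ^ (α - (d:ℝ) - 2) * (2 ^ n * ρ) ^ ((d:ℝ) + 2 - β)) := by
    ring
  rw [e2, ← Real.rpow_add hA]
  have e3 : (α - (d:ℝ) - 2) + ((d:ℝ) + 2 - β) = α - β := by ring
  rw [e3, Real.mul_rpow (by positivity) hρ.le, ← Real.rpow_natCast (2:ℝ) n,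
    ← Real.rpow_mul (by norm_num : (0:ℝ) ≤ 2), mul_comm (n:ℝ) (α - β),
    Real.rpow_mul (by norm_num : (0:ℝ) ≤ 2), Real.rpow_natCast]
  ring

set_option maxHeartbeats 2000000

theorem stmt4 (d : ℕ) (hd : 1 ≤ d) (β : ℝ) (hβ : 0 ≤ β) (α : ℝ) (hαβ : α < β)
    (k : ℝ) (hk : 0 < k) :
    ∃ N : ℝ, 0 < N ∧ ∀ f : Pt d → ℝ, Measurable f → (∀ z, 0 ≤ f z) →
      ∀ ρ : ℝ, 0 < ρ → ∀ z : Pt d, z ∈ cyl d ρ 0 0 →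
        (∫⁻ w : Pt d, ENNReal.ofReal (pak d α k w.1 ‖w.2‖ *
            (((cyl d (2 * ρ) 0 0)ᶜ).indicator f (z.1 + w.1, z.2 + w.2)))) ≤
          ENNReal.ofReal (N * ρ ^ (α - β)) * maxF β f (0, 0) := by
  classical
  haveI : Nonempty (Fin d) := ⟨⟨0, hd⟩⟩
  haveI : Nontrivial (Spc d) := by
    refine ⟨⟨WithLp.toLp 2 (fun _ => 0 : Fin d → ℝ), WithLp.toLp 2 (fun _ => 1 : Fin d → ℝ), ?_⟩⟩
    intro h
    have := congrArg (fun v : Spc d => v ⟨0, hd⟩) h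
    simpa using this
  obtain ⟨N₁, hN₁, hker⟩ := pak_bound d α k hk
  set V : ℝ≥0∞ := volume (ball (0 : Spc d) 1) with hV
  have hVfin : V ≠ ⊤ := measure_ball_lt_top.ne
  have hVpos : 0 < V := measure_ball_pos _ _ one_pos
  set r0 : ℝ := (2:ℝ) ^ (α - β) with hr0def
  have hr0pos : 0 < r0 := Real.rpow_pos_of_pos two_pos _
  have hr0lt : r0 < 1 := Real.rpow_lt_one_of_one_lt_of_neg one_lt_two (by linarith)
  have h1r0 : 0 < 1 - r0 := by linarith
  set K : ℝ := N₁ * 4 ^ ((d:ℝ) + 2 - β) with hKdef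
  have hKpos : 0 < K := mul_pos hN₁ (Real.rpow_pos_of_pos (by norm_num) _)
  have hNN : 0 ≤ K * V.toReal * (1 - r0)⁻¹ :=
    mul_nonneg (mul_nonneg hKpos.le ENNReal.toReal_nonneg) (inv_nonneg.mpr h1r0.le)
  refine ⟨K * V.toReal * (1 - r0)⁻¹ + 1, by linarith, ?_⟩
  intro f hf hf0 ρ hρ z hz
  simp only [cyl, Set.mem_prod, Set.mem_Ioo, mem_ball_zero_iff, zero_add] at hz
  obtain ⟨⟨hz1, hz2⟩, hz3⟩ := hz
  set A : ℕ → ℝ := fun n => 2 ^ n * ρ with hA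
  have hApos : ∀ n, 0 < A n := fun n => by
    simp only [hA]; positivity
  have hA1 : ∀ n, ρ ≤ A n := by
    intro n
    simp only [hA]
    have h2n : (1:ℝ) ≤ 2 ^ n := one_le_pow₀ one_le_two
    nlinarith
  set lam : ℕ → ℝ := fun n => 4 * A n with hlam
  have hlampos : ∀ n, 0 < lam n := fun n => by
    have := hApos n; simp only [hlam]; linarith
  set Cb : ℕ → Set (Pt d) := fun n => cyl d (lam n) (-(lam n ^ 2) / 2) 0 with hCb
  have hCbmeas : ∀ n, MeasurableSet (Cb n) := fun n => measurableSet_Ioo.prod measurableSet_ball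
  set g : Pt d → ℝ≥0∞ := fun v => ENNReal.ofReal (f v) with hg
  have hgmeas : Measurable g := hf.ennreal_ofReal
  set c : ℕ → ℝ := fun n => N₁ * A n ^ (α - (d:ℝ) - 2) with hc
  have hcpos : ∀ n, 0 < c n := fun n =>
    mul_pos hN₁ (Real.rpow_pos_of_pos (hApos n) _)
  set F : ℕ → Pt d → ℝ≥0∞ :=
    fun n w => ENNReal.ofReal (c n) * (Cb n).indicator g (z + w) with hF
  have hinner : ∀ n, Measurable (fun w : Pt d => (Cb n).indicator g (z + w)) :=
    fun n => (hgmeas.indicator (hCbmeas n)).comp (measurable_const_add z)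
  have hFmeas : ∀ n, Measurable (F n) := by
    intro n
    simp only [hF]
    exact (hinner n).const_mul _
  -- pointwise bound
  have hpt : ∀ w : Pt d, ENNReal.ofReal (pak d α k w.1 ‖w.2‖ *
      (((cyl d (2 * ρ) 0 0)ᶜ).indicator f (z.1 + w.1, z.2 + w.2))) ≤ ∑' n, F n w := by
    intro w
    by_cases hs : 0 < w.1
    · by_cases hmem : (z.1 + w.1, z.2 + w.2) ∈ cyl d (2 * ρ) 0 0
      · rw [Set.indicator_of_notMem (by simpa using hmem), mul_zero, ENNReal.ofReal_zero]
        exact zero_le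
      · set M : ℝ := max (Real.sqrt w.1) ‖w.2‖ with hM
        have hM0 : 0 ≤ M := le_trans (Real.sqrt_nonneg _) (le_max_left _ _)
        have hsM : w.1 ≤ M ^ 2 := by
          nlinarith [Real.sq_sqrt hs.le, le_max_left (Real.sqrt w.1) ‖w.2‖, Real.sqrt_nonneg w.1]
        have hyM : ‖w.2‖ ≤ M := le_max_right _ _
        have hρM : ρ ≤ M := by
          by_contra hcon
          push_neg at hcon
          apply hmem
          simp only [cyl, Set.mem_prod, Set.mem_Ioo, mem_ball_zero_iff, zero_add]
          refine ⟨⟨by linarith, by nlinarith⟩, ?_⟩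
          calc ‖z.2 + w.2‖ ≤ ‖z.2‖ + ‖w.2‖ := norm_add_le _ _
            _ < 2 * ρ := by linarith [hyM.trans_lt hcon]
        obtain ⟨n, hn1, hn2⟩ : ∃ n : ℕ, 2 ^ n * ρ ≤ M ∧ M < 2 ^ (n+1) * ρ := by
          obtain ⟨n, h1, h2⟩ := aux_dyadic (M / ρ) (by rwa [le_div_iff₀ hρ, one_mul])
          exact ⟨n, (le_div_iff₀ hρ).mp h1, by rwa [div_lt_iff₀ hρ] at h2⟩
        have hAM : A n ≤ M := by simp only [hA]; exact hn1
        have hMA : M < 2 * A n := by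
          simp only [hA]
          calc M < 2 ^ (n+1) * ρ := hn2
            _ = 2 * (2 ^ n * ρ) := by ring
        refine le_trans ?_ (ENNReal.le_tsum n)
        have hmem2 : z + w ∈ Cb n := by
          have hzw : z + w = (z.1 + w.1, z.2 + w.2) := rfl
          rw [hzw, hCb]
          simp only [cyl, Set.mem_prod, Set.mem_Ioo, mem_ball_zero_iff]
          have hlamA : lam n = 4 * A n := by simp only [hlam]
          refine ⟨⟨by nlinarith [hApos n, sq_nonneg (lam n), hlampos n], ?_⟩, ?_⟩
          · rw [hlamA]
            nlinarith [hA1 n, hApos n]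
          · rw [hlamA]
            calc ‖z.2 + w.2‖ ≤ ‖z.2‖ + ‖w.2‖ := norm_add_le _ _
              _ < ρ + 2 * A n := by linarith [hyM.trans_lt hMA]
              _ ≤ 4 * A n := by linarith [hA1 n, hApos n]
        have hkerb : pak d α k w.1 ‖w.2‖ ≤ c n := by
          simp only [hc]
          exact hker w.1 ‖w.2‖ (A n) hs (norm_nonneg _) (hApos n) hAM hMA
        have hmemc : (z.1 + w.1, z.2 + w.2) ∈ (cyl d (2 * ρ) 0 0)ᶜ := hmem
        rw [Set.indicator_of_mem hmemc]
        simp only [hF]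
        rw [Set.indicator_of_mem hmem2]
        simp only [hg]
        rw [← ENNReal.ofReal_mul (hcpos n).le]
        apply ENNReal.ofReal_le_ofReal
        have hzw : z + w = (z.1 + w.1, z.2 + w.2) := rfl
        rw [hzw]
        exact mul_le_mul_of_nonneg_right hkerb (hf0 _)
    · rw [pak, if_neg hs, zero_mul, ENNReal.ofReal_zero]
      exact zero_le
  -- per-term integral bound
  have hterm : ∀ n, (∫⁻ w, F n w) ≤
      ENNReal.ofReal (K * ρ ^ (α - β) * r0 ^ n) * (V * maxF β f (0, 0)) := by
    intro n
    have hvol : volume (Cb n) =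
        ENNReal.ofReal (lam n ^ 2) * (ENNReal.ofReal (lam n ^ d) * V) := by
      simp only [hCb]
      simp only [cyl]
      rw [Measure.volume_eq_prod, Measure.prod_prod, Real.volume_Ioo,
        Measure.addHaar_ball _ _ (hlampos n).le, finrank_euclideanSpace_fin, hV]
      congr 2
      ring
    have hvne : volume (Cb n) ≠ 0 := by
      rw [hvol]
      refine mul_ne_zero ?_ (mul_ne_zero ?_ hVpos.ne')
      · exact (ENNReal.ofReal_pos.mpr (pow_pos (hlampos n) 2)).ne'
      · exact (ENNReal.ofReal_pos.mpr (pow_pos (hlampos n) d)).ne'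
    have hvtop : volume (Cb n) ≠ ⊤ := by
      rw [hvol]
      exact ENNReal.mul_ne_top ENNReal.ofReal_ne_top
        (ENNReal.mul_ne_top ENNReal.ofReal_ne_top hVfin)
    have hIn : (∫⁻ w, F n w) = ENNReal.ofReal (c n) * ∫⁻ v in Cb n, g v := by
      simp only [hF]
      rw [lintegral_const_mul _ (hinner n)]
      congr 1
      have h1 : (∫⁻ w, (Cb n).indicator g (z + w)) = ∫⁻ v, (Cb n).indicator g v := by
        rw [Measure.volume_eq_prod]
        exact lintegral_add_left_eq_self ((Cb n).indicator g) z
      rw [h1, lintegral_indicator (hCbmeas n)]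
    have havg : ENNReal.ofReal (lam n ^ β) * aveLin (Cb n) f ≤ maxF β f (0, 0) := by
      have h0 : ((0:ℝ), (0:Spc d)) ∈ cyl d (lam n) (-(lam n ^ 2) / 2) 0 := by
        simp only [cyl, Set.mem_prod, Set.mem_Ioo, mem_ball_zero_iff]
        refine ⟨⟨by nlinarith [hlampos n], by nlinarith [hlampos n]⟩, ?_⟩
        simpa using hlampos n
      rw [maxF]
      exact le_iSup_of_le (lam n) <| le_iSup_of_le (hlampos n) <|
        le_iSup_of_le (-(lam n ^ 2) / 2) <| le_iSup_of_le (0:Spc d) <|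
        le_iSup_of_le h0 (le_of_eq (by rw [hCb]))
    have h2 : (∫⁻ v in Cb n, g v) = volume (Cb n) * aveLin (Cb n) f := by
      rw [aveLin, ← mul_assoc, ENNReal.mul_inv_cancel hvne hvtop, one_mul]
    have hb0 : ENNReal.ofReal (lam n ^ β) ≠ 0 :=
      (ENNReal.ofReal_pos.mpr (Real.rpow_pos_of_pos (hlampos n) β)).ne'
    have h3 : aveLin (Cb n) f ≤ (ENNReal.ofReal (lam n ^ β))⁻¹ * maxF β f (0, 0) := by
      calc aveLin (Cb n) f
          = (ENNReal.ofReal (lam n ^ β))⁻¹ * (ENNReal.ofReal (lam n ^ β) * aveLin (Cb n) f) := by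
            rw [← mul_assoc, ENNReal.inv_mul_cancel hb0 ENNReal.ofReal_ne_top, one_mul]
        _ ≤ _ := mul_le_mul_right havg _
    have hIle : (∫⁻ v in Cb n, g v) ≤
        volume (Cb n) * ((ENNReal.ofReal (lam n ^ β))⁻¹ * maxF β f (0, 0)) := by
      rw [h2]
      exact mul_le_mul_right h3 _
    have hcoeff : ENNReal.ofReal (c n) * (volume (Cb n) * (ENNReal.ofReal (lam n ^ β))⁻¹) =
        ENNReal.ofReal (K * ρ ^ (α - β) * r0 ^ n) * V := by
      rw [hvol, ← ENNReal.ofReal_inv_of_pos (Real.rpow_pos_of_pos (hlampos n) β)]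
      have hstep : ENNReal.ofReal (c n) *
          (ENNReal.ofReal (lam n ^ 2) * (ENNReal.ofReal (lam n ^ d) * V) *
            ENNReal.ofReal ((lam n ^ β)⁻¹)) =
          (ENNReal.ofReal (c n) * (ENNReal.ofReal (lam n ^ 2) *
            (ENNReal.ofReal (lam n ^ d) * ENNReal.ofReal ((lam n ^ β)⁻¹)))) * V := by
        ring
      rw [hstep, ← ENNReal.ofReal_mul (by positivity), ← ENNReal.ofReal_mul (by positivity),
        ← ENNReal.ofReal_mul (hcpos n).le]
      congr 2
      have hlamA : lam n = 4 * A n := by simp only [hlam]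
      have hAn : A n = 2 ^ n * ρ := by simp only [hA]
      simp only [hc]
      rw [hAn] at hlamA ⊢
      rw [hlamA, hKdef, hr0def]
      exact coeff_eq d α β ρ hρ N₁ n
    calc (∫⁻ w, F n w) = ENNReal.ofReal (c n) * ∫⁻ v in Cb n, g v := hIn
      _ ≤ ENNReal.ofReal (c n) *
          (volume (Cb n) * ((ENNReal.ofReal (lam n ^ β))⁻¹ * maxF β f (0, 0))) :=
            mul_le_mul_right hIle _
      _ = (ENNReal.ofReal (c n) * (volume (Cb n) * (ENNReal.ofReal (lam n ^ β))⁻¹)) *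
            maxF β f (0, 0) := by ring
      _ = (ENNReal.ofReal (K * ρ ^ (α - β) * r0 ^ n) * V) * maxF β f (0, 0) := by rw [hcoeff]
      _ = ENNReal.ofReal (K * ρ ^ (α - β) * r0 ^ n) * (V * maxF β f (0, 0)) := by ring
  -- sum up
  have hKρ : 0 ≤ K * ρ ^ (α - β) :=
    mul_nonneg hKpos.le (Real.rpow_pos_of_pos hρ _).le
  calc (∫⁻ w : Pt d, ENNReal.ofReal (pak d α k w.1 ‖w.2‖ *
          (((cyl d (2 * ρ) 0 0)ᶜ).indicator f (z.1 + w.1, z.2 + w.2))))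
      ≤ ∫⁻ w, ∑' n, F n w := lintegral_mono hpt
    _ = ∑' n, ∫⁻ w, F n w := lintegral_tsum (fun n => (hFmeas n).aemeasurable)
    _ ≤ ∑' n, ENNReal.ofReal (K * ρ ^ (α - β) * r0 ^ n) * (V * maxF β f (0, 0)) :=
        ENNReal.tsum_le_tsum hterm
    _ = ∑' n, ENNReal.ofReal (K * ρ ^ (α - β)) * ENNReal.ofReal r0 ^ n *
          (V * maxF β f (0, 0)) := by
        congr 1
        funext n
        rw [ENNReal.ofReal_mul hKρ, ENNReal.ofReal_pow hr0pos.le]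
    _ = ENNReal.ofReal (K * ρ ^ (α - β)) * (∑' n : ℕ, ENNReal.ofReal r0 ^ n) *
          (V * maxF β f (0, 0)) := by
        rw [ENNReal.tsum_mul_right, ENNReal.tsum_mul_left]
    _ = (ENNReal.ofReal (K * ρ ^ (α - β)) * (1 - ENNReal.ofReal r0)⁻¹ * V) *
          maxF β f (0, 0) := by
        rw [ENNReal.tsum_geometric]
        ring
    _ ≤ ENNReal.ofReal ((K * V.toReal * (1 - r0)⁻¹ + 1) * ρ ^ (α - β)) * maxF β f (0, 0) := by
        apply mul_le_mul_left
        have hsub : (1:ℝ≥0∞) - ENNReal.ofReal r0 = ENNReal.ofReal (1 - r0) := by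
          rw [ENNReal.ofReal_sub 1 hr0pos.le, ENNReal.ofReal_one]
        rw [hsub, ← ENNReal.ofReal_inv_of_pos h1r0]
        conv_lhs => rw [← ENNReal.ofReal_toReal hVfin]
        rw [← ENNReal.ofReal_mul hKρ, ← ENNReal.ofReal_mul (by positivity)]
        apply ENNReal.ofReal_le_ofReal
        have hρa : 0 < ρ ^ (α - β) := Real.rpow_pos_of_pos hρ _
        have hinv0 : 0 ≤ (1 - r0)⁻¹ := inv_nonneg.mpr h1r0.le
        nlinarith [ENNReal.toReal_nonneg (a := V)]
end
end

section
/- Let d ≥ 1 and α ∈ [0, d+2). Define w_α(t,x) = (|x| + √|t|)^{−α} on ℝ^{1+d}. Then w_α is a parabolic A₁-weight: there is a constant N = N(d,α) such that 𝕄 w_α(t,x) ≤ N w_α(t,x) for all (t,x) ∈ ℝ^{1+d} with (t,x) ≠ (0,0). -/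
open MeasureTheory Metric Set
open scoped ENNReal NNReal

noncomputable section

namespace Stmt9Aux

lemma sqrt_sub_le {a b : ℝ} (hb : 0 ≤ b) (h : b ≤ a) :
    Real.sqrt a - Real.sqrt b ≤ Real.sqrt (a - b) := by
  rw [sub_le_iff_le_add, Real.sqrt_le_iff]
  refine ⟨by positivity, ?_⟩
  have h1 : Real.sqrt (a-b) ^ 2 = a - b := Real.sq_sqrt (by linarith)
  have h2 : Real.sqrt b ^ 2 = b := Real.sq_sqrt hb
  nlinarith [Real.sqrt_nonneg (a-b), Real.sqrt_nonneg b]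

lemma sqrt_abs_sub (t s : ℝ) :
    |Real.sqrt (|t|) - Real.sqrt (|s|)| ≤ Real.sqrt (|t - s|) := by
  have key : ∀ u v : ℝ, Real.sqrt (|u|) - Real.sqrt (|v|) ≤ Real.sqrt (|u - v|) := by
    intro u v
    rcases le_total (|u|) (|v|) with h | h
    · have h1 : Real.sqrt (|u|) ≤ Real.sqrt (|v|) := Real.sqrt_le_sqrt h
      have h2 : Real.sqrt (|u|) - Real.sqrt (|v|) ≤ 0 := by linarith
      exact h2.trans (Real.sqrt_nonneg _)
    · refine (sqrt_sub_le (abs_nonneg v) h).trans (Real.sqrt_le_sqrt ?_)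
      exact abs_sub_abs_le_abs_sub u v
  rw [abs_sub_le_iff]
  refine ⟨key t s, ?_⟩
  have h3 := key s t
  rwa [show |s - t| = |t - s| from abs_sub_comm s t] at h3

lemma prho_nonneg {d : ℕ} (z : Pt d) : 0 ≤ prho z :=
  add_nonneg (norm_nonneg _) (Real.sqrt_nonneg _)

lemma prho_pos {d : ℕ} {z : Pt d} (hz : z ≠ (0, 0)) : 0 < prho z := by
  rcases (prho_nonneg z).lt_or_eq with h | h
  · exact h
  exfalso; apply hz
  have e : ‖z.2‖ + Real.sqrt (|z.1|) = 0 := h.symm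
  have hn : 0 ≤ ‖z.2‖ := norm_nonneg _
  have hs : 0 ≤ Real.sqrt (|z.1|) := Real.sqrt_nonneg _
  have h1 : z.2 = 0 := norm_eq_zero.mp (le_antisymm (by linarith) hn)
  have h2 : z.1 = 0 := by
    have e2 : Real.sqrt (|z.1|) = 0 := le_antisymm (by linarith) hs
    exact abs_eq_zero.mp ((Real.sqrt_eq_zero (abs_nonneg z.1)).mp e2)
  exact Prod.ext h2 h1

lemma prho_continuous {d : ℕ} : Continuous (prho (d := d)) := by
  unfold prho
  exact (continuous_snd.norm).add (Real.continuous_sqrt.comp (continuous_fst.abs))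

lemma prho_diff {d : ℕ} {R t₀ : ℝ} {x₀ : Spc d} (hR : 0 < R) {z w : Pt d}
    (hz : z ∈ cyl d R t₀ x₀) (hw : w ∈ cyl d R t₀ x₀) :
    |prho w - prho z| ≤ 3 * R := by
  obtain ⟨hz1, hz2⟩ := hz
  obtain ⟨hw1, hw2⟩ := hw
  rw [mem_Ioo] at hz1 hw1
  rw [mem_ball] at hz2 hw2
  have hx : |‖w.2‖ - ‖z.2‖| ≤ 2 * R := by
    have h1 : dist w.2 z.2 < 2 * R := by
      calc dist w.2 z.2 ≤ dist w.2 x₀ + dist z.2 x₀ := dist_triangle_right _ _ _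
        _ < R + R := add_lt_add hw2 hz2
        _ = 2 * R := by ring
    calc |‖w.2‖ - ‖z.2‖| ≤ ‖w.2 - z.2‖ := abs_norm_sub_norm_le _ _
      _ = dist w.2 z.2 := (dist_eq_norm _ _).symm
      _ ≤ 2 * R := h1.le
  have ht : |Real.sqrt (|w.1|) - Real.sqrt (|z.1|)| ≤ R := by
    refine (sqrt_abs_sub w.1 z.1).trans ?_
    have h1 : |w.1 - z.1| ≤ R ^ 2 := by
      rw [abs_le]
      constructor
      · nlinarith [hz1.1, hz1.2, hw1.1, hw1.2]
      · nlinarith [hz1.1, hz1.2, hw1.1, hw1.2]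
    calc Real.sqrt (|w.1 - z.1|) ≤ Real.sqrt (R ^ 2) := Real.sqrt_le_sqrt h1
      _ = R := Real.sqrt_sq hR.le
  have hsplit : prho w - prho z
      = (‖w.2‖ - ‖z.2‖) + (Real.sqrt (|w.1|) - Real.sqrt (|z.1|)) := by
    unfold prho; ring
  rw [hsplit]
  calc |(‖w.2‖ - ‖z.2‖) + (Real.sqrt (|w.1|) - Real.sqrt (|z.1|))|
      ≤ |‖w.2‖ - ‖z.2‖| + |Real.sqrt (|w.1|) - Real.sqrt (|z.1|)| := abs_add_le _ _
    _ ≤ 2 * R + R := add_le_add hx ht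
    _ = 3 * R := by ring

lemma vol_sublevel_le {d : ℕ} {s : ℝ} (hs : 0 ≤ s) :
    volume {w : Pt d | prho w ≤ s} ≤
      ENNReal.ofReal (2 * s ^ (d + 2)) * volume (ball (0 : Spc d) 1) := by
  have hsub : {w : Pt d | prho w ≤ s} ⊆ (Icc (-(s^2)) (s^2)) ×ˢ closedBall (0 : Spc d) s := by
    intro w hw
    simp only [mem_setOf_eq] at hw
    have hns : 0 ≤ ‖w.2‖ := norm_nonneg _
    have hss : 0 ≤ Real.sqrt (|w.1|) := Real.sqrt_nonneg _
    have h1 : Real.sqrt (|w.1|) ≤ s := by unfold prho at hw; linarith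
    have h2 : ‖w.2‖ ≤ s := by unfold prho at hw; linarith
    constructor
    · have h3 : |w.1| ≤ s ^ 2 := (Real.sqrt_le_left hs).mp h1
      exact mem_Icc.mpr (abs_le.mp h3)
    · exact mem_closedBall_zero_iff.mpr h2
  calc volume {w : Pt d | prho w ≤ s} ≤ volume ((Icc (-(s^2)) (s^2)) ×ˢ closedBall (0 : Spc d) s) :=
        measure_mono hsub
    _ = volume (Icc (-(s^2)) (s^2)) * volume (closedBall (0 : Spc d) s) := by
        rw [MeasureTheory.Measure.volume_eq_prod, MeasureTheory.Measure.prod_prod]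
    _ = ENNReal.ofReal (2 * s^2) *
          (ENNReal.ofReal (s ^ d) * volume (ball (0 : Spc d) 1)) := by
        rw [Real.volume_Icc, MeasureTheory.Measure.addHaar_closedBall _ _ hs,
          finrank_euclideanSpace_fin]
        congr 1
        ring_nf
    _ = ENNReal.ofReal (2 * s ^ (d + 2)) * volume (ball (0 : Spc d) 1) := by
        rw [← mul_assoc, ← ENNReal.ofReal_mul (by positivity)]
        congr 2
        ring



lemma key_alg {r α : ℝ} (hr : 0 < r) (d k : ℕ) :
    (r * (1/2:ℝ)^(k+1)) ^ (-α) * (2 * (r * (1/2:ℝ)^k) ^ (d+2)) =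
      (2 * (2:ℝ) ^ α) * r ^ ((d:ℝ) + 2 - α) * ((1/2:ℝ) ^ ((d:ℝ) + 2 - α)) ^ k := by
  have h2 : (0:ℝ) < 1/2 := by norm_num
  have e1 : (r * (1/2:ℝ)^(k+1)) ^ (-α)
      = r ^ (-α) * ((1/2:ℝ) ^ (-α) * ((1/2:ℝ) ^ ((k:ℝ) * (-α)))) := by
    rw [Real.mul_rpow hr.le (by positivity), ← Real.rpow_natCast (1/2:ℝ) (k+1),
      ← Real.rpow_mul h2.le, show ((k+1:ℕ):ℝ) * (-α) = -α + (k:ℝ) * (-α) by push_cast; ring,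
      Real.rpow_add h2]
  have e2 : (r * (1/2:ℝ)^k) ^ (d+2)
      = r ^ ((d:ℝ) + 2) * (1/2:ℝ) ^ ((k:ℝ) * ((d:ℝ) + 2)) := by
    rw [mul_pow, ← Real.rpow_natCast r (d+2), ← pow_mul,
      ← Real.rpow_natCast (1/2:ℝ) (k*(d+2))]
    push_cast
    ring_nf
  have e3 : ((1/2:ℝ) ^ ((d:ℝ) + 2 - α)) ^ k
      = (1/2:ℝ) ^ ((k:ℝ) * ((d:ℝ) + 2)) * (1/2:ℝ) ^ ((k:ℝ) * (-α)) := by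
    rw [← Real.rpow_natCast ((1/2:ℝ) ^ ((d:ℝ) + 2 - α)) k, ← Real.rpow_mul h2.le,
      show ((d:ℝ) + 2 - α) * (k:ℝ) = (k:ℝ) * ((d:ℝ) + 2) + (k:ℝ) * (-α) by ring,
      Real.rpow_add h2]
  have e4 : (2:ℝ) ^ α = (1/2:ℝ) ^ (-α) := by
    rw [one_div, Real.inv_rpow (by norm_num : (0:ℝ) ≤ 2), Real.rpow_neg (by norm_num : (0:ℝ) ≤ 2),
      inv_inv]
  have e5 : r ^ ((d:ℝ) + 2 - α) = r ^ ((d:ℝ) + 2) * r ^ (-α) := by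
    rw [← Real.rpow_add hr]; ring_nf
  rw [e1, e2, e3, e4, e5]
  ring
lemma intB (d : ℕ) (α : ℝ) (hα0 : 0 ≤ α) (hα : α < (d : ℝ) + 2) :
    ∃ M : ℝ, 0 < M ∧ ∀ r : ℝ, 0 < r →
      ∫⁻ w in {w : Pt d | prho w ≤ r}, ENNReal.ofReal (prho w ^ (-α)) ≤
        ENNReal.ofReal (M * r ^ ((d : ℝ) + 2 - α)) := by
  set D : ℝ := (d : ℝ) + 2 - α with hD
  have hD0 : 0 < D := by rw [hD]; linarith
  set q : ℝ := (1/2 : ℝ) ^ D with hq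
  have hq0 : 0 < q := Real.rpow_pos_of_pos (by norm_num) _
  have hq1 : q < 1 := Real.rpow_lt_one (by norm_num) (by norm_num) hD0
  have h1q : 0 < 1 - q := by linarith
  set Kb := volume (ball (0 : Spc d) 1) with hKb
  have hKbT : Kb ≠ ∞ := measure_ball_lt_top.ne
  set κ := Kb.toReal with hκ
  have hκ0 : 0 ≤ κ := ENNReal.toReal_nonneg
  set c : ℝ := 2 * 2 ^ α * κ with hc
  have hc0 : 0 ≤ c := by positivity
  refine ⟨c * (1 - q)⁻¹ + 1, ?_, ?_⟩
  · have h1 : 0 ≤ c * (1 - q)⁻¹ := mul_nonneg hc0 (inv_pos.mpr h1q).le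
    linarith
  intro r hr
  set A : ℕ → Set (Pt d) := fun k =>
    {w | r * (1/2:ℝ)^(k+1) < prho w ∧ prho w ≤ r * (1/2:ℝ)^k} with hA
  have hAm : ∀ k, MeasurableSet (A k) := by
    intro k
    have : A k = prho ⁻¹' (Ioc (r * (1/2:ℝ)^(k+1)) (r * (1/2:ℝ)^k)) := rfl
    rw [this]
    exact prho_continuous.measurable measurableSet_Ioc
  -- covering
  have hcov : {w : Pt d | 0 < prho w ∧ prho w ≤ r} ⊆ ⋃ k, A k := by
    rintro w ⟨hw2, hw1⟩
    have hex : ∃ k : ℕ, r * (1/2:ℝ)^k < prho w := by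
      obtain ⟨n, hn⟩ := exists_pow_lt_of_lt_one (div_pos hw2 hr) (by norm_num : (1/2:ℝ) < 1)
      exact ⟨n, by rw [mul_comm]; exact (lt_div_iff₀ hr).mp hn⟩
    have hk0 := Nat.find_spec hex
    have hk0ne : Nat.find hex ≠ 0 := by
      intro h0
      rw [h0] at hk0
      simp only [pow_zero, mul_one] at hk0
      linarith
    obtain ⟨m, hm⟩ := Nat.exists_eq_succ_of_ne_zero hk0ne
    have hmin : ¬ (r * (1/2:ℝ)^m < prho w) := Nat.find_min hex (by omega)
    push_neg at hmin
    rw [hm] at hk0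
    exact mem_iUnion.mpr ⟨m, ⟨hk0, hmin⟩⟩
  -- null set
  have hnull : volume {w : Pt d | prho w = 0} = 0 := by
    have hsub0 : {w : Pt d | prho w = 0} ⊆ ({(0:ℝ)} ×ˢ (univ : Set (Spc d))) := by
      intro w hw
      simp only [mem_setOf_eq] at hw
      have hn : 0 ≤ ‖w.2‖ := norm_nonneg _
      have hs : 0 ≤ Real.sqrt (|w.1|) := Real.sqrt_nonneg _
      have e : ‖w.2‖ + Real.sqrt (|w.1|) = 0 := hw
      have e2 : Real.sqrt (|w.1|) = 0 := le_antisymm (by linarith) hs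
      have h1 : w.1 = 0 := abs_eq_zero.mp ((Real.sqrt_eq_zero (abs_nonneg w.1)).mp e2)
      exact ⟨h1, mem_univ _⟩
    refine measure_mono_null hsub0 ?_
    rw [MeasureTheory.Measure.volume_eq_prod, MeasureTheory.Measure.prod_prod,
      Real.volume_singleton, zero_mul]
  -- per-annulus bound
  have hterm : ∀ k, ∫⁻ w in A k, ENNReal.ofReal (prho w ^ (-α)) ≤
      ENNReal.ofReal (c * r ^ D) * ENNReal.ofReal q ^ k := by
    intro k
    have hb1 : 0 < r * (1/2:ℝ)^(k+1) := by positivity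
    have hb0 : (0:ℝ) ≤ r * (1/2:ℝ)^k := by positivity
    calc ∫⁻ w in A k, ENNReal.ofReal (prho w ^ (-α))
        ≤ ∫⁻ _ in A k, ENNReal.ofReal ((r * (1/2:ℝ)^(k+1)) ^ (-α)) := by
          refine setLIntegral_mono' (hAm k) fun w hw => ?_
          exact ENNReal.ofReal_le_ofReal
            (Real.rpow_le_rpow_of_nonpos hb1 hw.1.le (neg_nonpos.mpr hα0))
      _ = ENNReal.ofReal ((r * (1/2:ℝ)^(k+1)) ^ (-α)) * volume (A k) :=
          setLIntegral_const _ _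
      _ ≤ ENNReal.ofReal ((r * (1/2:ℝ)^(k+1)) ^ (-α)) *
            (ENNReal.ofReal (2 * (r * (1/2:ℝ)^k) ^ (d+2)) * Kb) := by
          refine mul_le_mul_right ?_ _
          refine le_trans (measure_mono fun w hw => hw.2) ?_
          exact vol_sublevel_le hb0
      _ = ENNReal.ofReal ((r * (1/2:ℝ)^(k+1)) ^ (-α) * (2 * (r * (1/2:ℝ)^k) ^ (d+2)) * κ) := by
          rw [← ENNReal.ofReal_toReal hKbT, ← hκ,
            ← ENNReal.ofReal_mul (by positivity), ← ENNReal.ofReal_mul ?_]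
          · ring_nf
          · exact Real.rpow_nonneg hb1.le _
      _ = ENNReal.ofReal (c * r ^ D * q ^ k) := by
          rw [key_alg hr d k, hc, hq, hD]
          ring_nf
      _ = ENNReal.ofReal (c * r ^ D) * ENNReal.ofReal q ^ k := by
          rw [ENNReal.ofReal_mul (by positivity), ENNReal.ofReal_pow hq0.le]
  -- assemble
  have hsplit : {w : Pt d | prho w ≤ r} ⊆
      {w : Pt d | 0 < prho w ∧ prho w ≤ r} ∪ {w : Pt d | prho w = 0} := by
    intro w hw
    rcases (prho_nonneg w).lt_or_eq with h | h
    · exact Or.inl ⟨h, hw⟩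
    · exact Or.inr h.symm
  calc ∫⁻ w in {w : Pt d | prho w ≤ r}, ENNReal.ofReal (prho w ^ (-α))
      ≤ ∫⁻ w in ({w : Pt d | 0 < prho w ∧ prho w ≤ r} ∪ {w : Pt d | prho w = 0}),
          ENNReal.ofReal (prho w ^ (-α)) := lintegral_mono_set hsplit
    _ ≤ (∫⁻ w in {w : Pt d | 0 < prho w ∧ prho w ≤ r}, ENNReal.ofReal (prho w ^ (-α)))
          + ∫⁻ w in {w : Pt d | prho w = 0}, ENNReal.ofReal (prho w ^ (-α)) :=
        lintegral_union_le _ _ _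
    _ = ∫⁻ w in {w : Pt d | 0 < prho w ∧ prho w ≤ r}, ENNReal.ofReal (prho w ^ (-α)) := by
        rw [setLIntegral_measure_zero _ _ hnull, add_zero]
    _ ≤ ∫⁻ w in (⋃ k, A k), ENNReal.ofReal (prho w ^ (-α)) := lintegral_mono_set hcov
    _ ≤ ∑' k, ∫⁻ w in A k, ENNReal.ofReal (prho w ^ (-α)) := lintegral_iUnion_le _ _
    _ ≤ ∑' k, ENNReal.ofReal (c * r ^ D) * ENNReal.ofReal q ^ k := ENNReal.tsum_le_tsum hterm
    _ = ENNReal.ofReal (c * r ^ D) * (1 - ENNReal.ofReal q)⁻¹ := by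
        rw [ENNReal.tsum_mul_left, ENNReal.tsum_geometric]
    _ = ENNReal.ofReal (c * r ^ D * (1 - q)⁻¹) := by
        rw [show (1:ℝ≥0∞) - ENNReal.ofReal q = ENNReal.ofReal (1 - q) by
            rw [ENNReal.ofReal_sub _ hq0.le, ENNReal.ofReal_one],
          ← ENNReal.ofReal_inv_of_pos h1q, ← ENNReal.ofReal_mul (by positivity)]
    _ ≤ ENNReal.ofReal ((c * (1 - q)⁻¹ + 1) * r ^ D) := by
        refine ENNReal.ofReal_le_ofReal ?_
        have hrD : 0 ≤ r ^ D := Real.rpow_nonneg hr.le _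
        nlinarith [mul_nonneg (mul_nonneg hc0 hrD) (inv_pos.mpr h1q).le]
end Stmt9Aux
theorem stmt9 (d : ℕ) (hd : 1 ≤ d) (α : ℝ) (hα0 : 0 ≤ α) (hα : α < (d : ℝ) + 2) :
    ∃ N : ℝ, 0 < N ∧ ∀ z : Pt d, z ≠ (0, 0) →
      maxF 0 (fun w => prho w ^ (-α)) z ≤ ENNReal.ofReal (N * prho z ^ (-α)) := by
  haveI : Nonempty (Fin d) := ⟨⟨0, hd⟩⟩
  haveI : Nontrivial (Spc d) := inferInstance
  obtain ⟨M, hM, hB⟩ := Stmt9Aux.intB d α hα0 hα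
  set Kb := volume (ball (0 : Spc d) 1) with hKbdef
  have hKb0 : 0 < Kb := measure_ball_pos _ _ one_pos
  have hKbT : Kb ≠ ∞ := measure_ball_lt_top.ne
  set κ := Kb.toReal with hκdef
  have hκ : 0 < κ := ENNReal.toReal_pos hKb0.ne' hKbT
  set D : ℝ := (d : ℝ) + 2 - α with hD
  have h2α : (0:ℝ) < 2 ^ α := Real.rpow_pos_of_pos (by norm_num) _
  have h9D : (0:ℝ) < 9 ^ D := Real.rpow_pos_of_pos (by norm_num) _
  have h6α : (0:ℝ) < 6 ^ α := Real.rpow_pos_of_pos (by norm_num) _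
  have hN2 : 0 ≤ M * 9 ^ D * 6 ^ α / κ := by positivity
  refine ⟨2 ^ α + M * 9 ^ D * 6 ^ α / κ, by linarith, ?_⟩
  intro z hz
  have hpz : 0 < prho z := Stmt9Aux.prho_pos hz
  have hpznn : 0 ≤ prho z ^ (-α) := Real.rpow_nonneg hpz.le _
  rw [maxF]
  refine iSup_le fun R => iSup_le fun hR => iSup_le fun t => iSup_le fun x =>
    iSup_le fun hmem => ?_
  rw [Real.rpow_zero, ENNReal.ofReal_one, one_mul, aveLin]
  have hCm : MeasurableSet (cyl d R t x) := measurableSet_Ioo.prod measurableSet_ball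
  have hvol : volume (cyl d R t x) = ENNReal.ofReal (R ^ (d+2) * κ) := by
    rw [cyl, MeasureTheory.Measure.volume_eq_prod, MeasureTheory.Measure.prod_prod,
      Real.volume_Ioo, MeasureTheory.Measure.addHaar_ball _ _ hR.le, finrank_euclideanSpace_fin,
      ← hKbdef, ← ENNReal.ofReal_toReal hKbT, ← hκdef, ← ENNReal.ofReal_mul (by positivity),
      ← ENNReal.ofReal_mul (by nlinarith)]
    congr 1
    ring
  have hvpos : 0 < R ^ (d+2) * κ := by positivity
  rcases le_or_gt (6*R) (prho z) with hcase | hcase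
  · -- far case: prho comparable on the cylinder
    have hptw : ∀ w ∈ cyl d R t x,
        ENNReal.ofReal (prho w ^ (-α)) ≤ ENNReal.ofReal (2 ^ α * prho z ^ (-α)) := by
      intro w hw
      have hd3 := Stmt9Aux.prho_diff hR hmem hw
      have hlow : prho z / 2 ≤ prho w := by
        have h1 := (abs_le.mp hd3).1
        linarith
      refine ENNReal.ofReal_le_ofReal ?_
      have h1 : prho w ^ (-α) ≤ (prho z / 2) ^ (-α) :=
        Real.rpow_le_rpow_of_nonpos (by linarith) hlow (neg_nonpos.mpr hα0)
      refine h1.trans (le_of_eq ?_)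
      rw [Real.div_rpow hpz.le (by norm_num : (0:ℝ) ≤ 2),
        Real.rpow_neg (by norm_num : (0:ℝ) ≤ 2)]
      field_simp
    calc (volume (cyl d R t x))⁻¹ * ∫⁻ w in cyl d R t x, ENNReal.ofReal (prho w ^ (-α))
        ≤ (volume (cyl d R t x))⁻¹ *
            (ENNReal.ofReal (2 ^ α * prho z ^ (-α)) * volume (cyl d R t x)) := by
          refine mul_le_mul_right ?_ _
          calc ∫⁻ w in cyl d R t x, ENNReal.ofReal (prho w ^ (-α))
              ≤ ∫⁻ _ in cyl d R t x, ENNReal.ofReal (2 ^ α * prho z ^ (-α)) :=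
                setLIntegral_mono' hCm hptw
            _ = ENNReal.ofReal (2 ^ α * prho z ^ (-α)) * volume (cyl d R t x) :=
                setLIntegral_const _ _
      _ = ENNReal.ofReal (2 ^ α * prho z ^ (-α)) := by
          rw [mul_comm ((volume (cyl d R t x))⁻¹), mul_assoc, hvol,
            ENNReal.mul_inv_cancel (ENNReal.ofReal_pos.mpr hvpos).ne' ENNReal.ofReal_ne_top,
            mul_one]
      _ ≤ ENNReal.ofReal ((2 ^ α + M * 9 ^ D * 6 ^ α / κ) * prho z ^ (-α)) := by
          refine ENNReal.ofReal_le_ofReal ?_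
          nlinarith
  · -- near case: use the integral bound
    have hsub : cyl d R t x ⊆ {w : Pt d | prho w ≤ 9*R} := by
      intro w hw
      have hd3 := Stmt9Aux.prho_diff hR hmem hw
      have h1 := (abs_le.mp hd3).2
      simp only [mem_setOf_eq]
      linarith
    have h9R : (0:ℝ) < 9*R := by linarith
    calc (volume (cyl d R t x))⁻¹ * ∫⁻ w in cyl d R t x, ENNReal.ofReal (prho w ^ (-α))
        ≤ (volume (cyl d R t x))⁻¹ * ENNReal.ofReal (M * (9*R) ^ D) := by
          refine mul_le_mul_right ?_ _
          exact (lintegral_mono_set hsub).trans (hB (9*R) h9R)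
      _ = ENNReal.ofReal (M * (9*R) ^ D / (R ^ (d+2) * κ)) := by
          rw [hvol, ← ENNReal.ofReal_inv_of_pos hvpos,
            ← ENNReal.ofReal_mul (inv_nonneg.mpr hvpos.le), inv_mul_eq_div]
      _ ≤ ENNReal.ofReal ((2 ^ α + M * 9 ^ D * 6 ^ α / κ) * prho z ^ (-α)) := by
          refine ENNReal.ofReal_le_ofReal ?_
          have e6 : ((9*R:ℝ)) ^ D = 9 ^ D * R ^ D := Real.mul_rpow (by norm_num) hR.le
          have e7 : R ^ D = R ^ (d+2) * R ^ (-α) := by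
            rw [hD, show (d:ℝ)+2-α = ((d+2:ℕ):ℝ) + (-α) by push_cast; ring,
              Real.rpow_add hR, Real.rpow_natCast]
          have e8 : R ^ (-α) ≤ 6 ^ α * prho z ^ (-α) := by
            have h1 : (6*R) ^ (-α) ≤ prho z ^ (-α) :=
              Real.rpow_le_rpow_of_nonpos hpz hcase.le (neg_nonpos.mpr hα0)
            have h2 : ((6*R:ℝ)) ^ (-α) = 6 ^ (-α) * R ^ (-α) := Real.mul_rpow (by norm_num) hR.le
            have h3 : (6:ℝ) ^ α * 6 ^ (-α) = 1 := by
              rw [← Real.rpow_add (by norm_num : (0:ℝ) < 6)]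
              simp
            calc R ^ (-α) = 6 ^ α * (6 ^ (-α) * R ^ (-α)) := by rw [← mul_assoc, h3, one_mul]
              _ = 6 ^ α * (6*R) ^ (-α) := by rw [h2]
              _ ≤ 6 ^ α * prho z ^ (-α) := mul_le_mul_of_nonneg_left h1 h6α.le
          have hRd : (0:ℝ) < R ^ (d+2) := by positivity
          have e9 : M * ((9*R)) ^ D / (R ^ (d+2) * κ) = (M * 9 ^ D / κ) * R ^ (-α) := by
            rw [e6, e7]
            field_simp
          rw [e9]
          have hMκ : 0 ≤ M * 9 ^ D / κ := by positivity
          calc (M * 9 ^ D / κ) * R ^ (-α) ≤ (M * 9 ^ D / κ) * (6 ^ α * prho z ^ (-α)) :=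
                mul_le_mul_of_nonneg_left e8 hMκ
            _ ≤ (2 ^ α + M * 9 ^ D * 6 ^ α / κ) * prho z ^ (-α) := by
                have h4 : (M * 9 ^ D / κ) * (6 ^ α * prho z ^ (-α))
                    = (M * 9 ^ D * 6 ^ α / κ) * prho z ^ (-α) := by ring
                nlinarith [mul_nonneg h2α.le hpznn]
end
end

section
/- Let d ≥ 1, α ≥ 0, β ≥ 0 with α + β > d + 2, and set w_α(t,x) = (|x| + √|t|)^{−α}. Then there is a constant N = N(d,α,β) such that for every measurable f ≥ 0 on ℝ^{1+d}, ∫_{ℝ^{1+d}} f(s,y) min(w_α(s,y), 1) dy ds ≤ N 𝕄_β f(0,0). -/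
open MeasureTheory Metric Set
open scoped ENNReal NNReal

noncomputable section

lemma prho_cont {d : ℕ} : Continuous (prho (d := d)) := by
  unfold prho
  exact (continuous_snd.norm).add (Real.continuous_sqrt.comp continuous_fst.abs)

lemma prho_nonneg {d : ℕ} (z : Pt d) : 0 ≤ prho z :=
  add_nonneg (norm_nonneg _) (Real.sqrt_nonneg _)

lemma measurableSet_S {d : ℕ} (r : ℝ) : MeasurableSet {z : Pt d | prho z < r} :=
  (isOpen_lt prho_cont continuous_const).measurableSet

lemma S_subset {d : ℕ} {r : ℝ} (hr : 0 < r) :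
    {z : Pt d | prho z < r} ⊆ cyl d (2*r) (-r^2) 0 := by
  rintro ⟨t, x⟩ hz
  simp only [Set.mem_setOf_eq, prho] at hz
  have hx : ‖x‖ < r := lt_of_le_of_lt (le_add_of_nonneg_right (Real.sqrt_nonneg _)) hz
  have ht' : Real.sqrt |t| < r := lt_of_le_of_lt (le_add_of_nonneg_left (norm_nonneg _)) hz
  have ht : |t| < r^2 := by
    nlinarith [Real.sq_sqrt (abs_nonneg t), Real.sqrt_nonneg |t|]
  have ht2 := abs_lt.mp ht
  refine ⟨⟨by simpa using ht2.1, by nlinarith⟩, ?_⟩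
  rw [mem_ball_zero_iff]; nlinarith [norm_nonneg x]

lemma origin_mem {d : ℕ} {r : ℝ} (hr : 0 < r) : ((0,0) : Pt d) ∈ cyl d (2*r) (-r^2) 0 := by
  exact ⟨⟨show -r^2 < (0:ℝ) by nlinarith, show (0:ℝ) < -r^2 + (2*r)^2 by nlinarith⟩, mem_ball_self (by positivity)⟩

lemma cyl_volume {d : ℕ} {R t : ℝ} (hR : 0 ≤ R) (x : Spc d) (hd : 1 ≤ d) :
    volume (cyl d R t x) =
      ENNReal.ofReal (R^2) * (ENNReal.ofReal (R^d) * volume (ball (0:Spc d) 1)) := by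
  haveI : Nonempty (Fin d) := ⟨⟨0, by omega⟩⟩
  rw [cyl, Measure.volume_eq_prod, Measure.prod_prod, Real.volume_Ioo,
    Measure.addHaar_ball volume x hR, finrank_euclideanSpace_fin]
  ring_nf

lemma keyA {d : ℕ} (hd : 1 ≤ d) (β : ℝ) (f : Pt d → ℝ) {r : ℝ} (hr : 0 < r) :
    ∫⁻ z in {z : Pt d | prho z < r}, ENNReal.ofReal (f z) ≤
      ENNReal.ofReal ((2*r)^2 * (2*r)^d * (((2*r) ^ β)⁻¹)) * volume (ball (0:Spc d) 1) *
        maxF β f ((0,0) : Pt d) := by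
  haveI : Nonempty (Fin d) := ⟨⟨0, by omega⟩⟩
  set R : ℝ := 2*r with hRdef
  have hR : 0 < R := by positivity
  set C : Set (Pt d) := cyl d R (-r^2) 0 with hC
  set Bd : ℝ≥0∞ := volume (ball (0:Spc d) 1) with hBd
  have hBd0 : Bd ≠ 0 := (measure_ball_pos volume _ one_pos).ne'
  have hBdt : Bd ≠ ⊤ := measure_ball_lt_top.ne
  have hV : volume C = ENNReal.ofReal (R^2) * (ENNReal.ofReal (R^d) * Bd) :=
    cyl_volume hR.le 0 hd
  have hV0 : volume C ≠ 0 := by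
    rw [hV]
    exact mul_ne_zero (ENNReal.ofReal_pos.mpr (by positivity)).ne'
      (mul_ne_zero (ENNReal.ofReal_pos.mpr (by positivity)).ne' hBd0)
  have hVt : volume C ≠ ⊤ := by
    rw [hV]
    exact ENNReal.mul_ne_top ENNReal.ofReal_ne_top
      (ENNReal.mul_ne_top ENNReal.ofReal_ne_top hBdt)
  have hRβ : (0:ℝ) < R ^ β := Real.rpow_pos_of_pos hR β
  have step3 : ENNReal.ofReal (R ^ β) * aveLin C f ≤ maxF β f ((0,0) : Pt d) := by
    refine le_iSup_of_le R (le_iSup_of_le hR (le_iSup_of_le (-r^2)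
      (le_iSup_of_le 0 (le_iSup_of_le (origin_mem hr) le_rfl))))
  have step4 : aveLin C f ≤ (ENNReal.ofReal (R ^ β))⁻¹ * maxF β f ((0,0) : Pt d) := by
    have h1 : aveLin C f = (ENNReal.ofReal (R ^ β))⁻¹ * (ENNReal.ofReal (R ^ β) * aveLin C f) := by
      rw [← mul_assoc, ENNReal.inv_mul_cancel (by simpa using hRβ) ENNReal.ofReal_ne_top, one_mul]
    rw [h1]
    exact mul_le_mul_right step3 _
  calc ∫⁻ z in {z : Pt d | prho z < r}, ENNReal.ofReal (f z)
      ≤ ∫⁻ z in C, ENNReal.ofReal (f z) := lintegral_mono_set (S_subset hr)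
    _ = volume C * aveLin C f := by
        rw [aveLin, ← mul_assoc, ENNReal.mul_inv_cancel hV0 hVt, one_mul]
    _ ≤ volume C * ((ENNReal.ofReal (R ^ β))⁻¹ * maxF β f ((0,0) : Pt d)) :=
        mul_le_mul_right step4 _
    _ = ENNReal.ofReal (R^2 * R^d * ((R ^ β)⁻¹)) * Bd * maxF β f ((0,0) : Pt d) := by
        rw [hV, ← ENNReal.ofReal_inv_of_pos hRβ,
          ENNReal.ofReal_mul (by positivity), ENNReal.ofReal_mul (by positivity)]
        ring

lemma pointwise {d : ℕ} {α : ℝ} (hα : 0 ≤ α) (f : Pt d → ℝ) (hf0 : ∀ z, 0 ≤ f z) (z : Pt d) :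
    ENNReal.ofReal (f z * min (prho z ^ (-α)) 1) ≤
      ∑' n : ℕ, ENNReal.ofReal (((2:ℝ)^n) ^ (-α)) *
        Set.indicator {w : Pt d | prho w < 2^(n+1)} (fun w => ENNReal.ofReal (f w)) z := by
  by_cases hz : prho z < 2
  · refine le_trans ?_ (ENNReal.le_tsum 0)
    rw [Set.indicator_of_mem (by simpa using hz)]
    simp only [pow_zero, Real.one_rpow, ENNReal.ofReal_one, one_mul]
    exact ENNReal.ofReal_le_ofReal (mul_le_of_le_one_right (hf0 z) (min_le_right _ _))
  · push_neg at hz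
    have hP : ∃ n : ℕ, prho z < 2^n := pow_unbounded_of_one_lt _ one_lt_two
    set n0 := Nat.find hP with hn0
    have hspec : prho z < 2^n0 := Nat.find_spec hP
    have hn0pos : 1 ≤ n0 := by
      by_contra h
      push_neg at h
      interval_cases n0
      · simp at hspec; linarith
    obtain ⟨m, hm⟩ : ∃ m, n0 = m + 1 := ⟨n0 - 1, by omega⟩
    have hlow : (2:ℝ)^m ≤ prho z := by
      have := Nat.find_min hP (m := m) (by omega)
      linarith [not_lt.mp this]
    refine le_trans ?_ (ENNReal.le_tsum m)
    rw [Set.indicator_of_mem (by simpa using hm ▸ hspec)]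
    rw [← ENNReal.ofReal_mul (by positivity)]
    refine ENNReal.ofReal_le_ofReal ?_
    rw [mul_comm (((2:ℝ)^m) ^ (-α)) (f z)]
    refine mul_le_mul_of_nonneg_left ?_ (hf0 z)
    refine le_trans (min_le_left _ _) ?_
    exact Real.rpow_le_rpow_of_nonpos (by positivity) hlow (neg_nonpos.mpr hα)

lemma realg (d : ℕ) (α β : ℝ) (n : ℕ) :
    ((2:ℝ)^n) ^ (-α) * ((2*(2:ℝ)^(n+1))^2 * (2*(2:ℝ)^(n+1))^d * ((2*(2:ℝ)^(n+1)) ^ β)⁻¹)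
      = (2:ℝ) ^ ((4:ℝ) + 2*(d:ℝ) - 2*β) * ((2:ℝ) ^ ((d:ℝ) + 2 - α - β))^n := by
  have h2 : (0:ℝ) ≤ 2 := by norm_num
  have A : ∀ (x y : ℝ), ((2:ℝ)^x)^y = 2^(x*y) := fun x y => (Real.rpow_mul h2 x y).symm
  have B : ∀ (x : ℝ) (m : ℕ), ((2:ℝ)^x)^m = 2^(x*m) := fun x m => by
    rw [← Real.rpow_natCast ((2:ℝ)^x) m, A]
  have Cv : ∀ x : ℝ, ((2:ℝ)^x)⁻¹ = 2^(-x) := fun x => (Real.rpow_neg h2 x).symm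
  have e1 : (2:ℝ)*2^(n+1) = 2^(((n:ℝ))+2) := by
    rw [show ((n:ℝ)+2) = (((n+2 : ℕ)):ℝ) by push_cast; ring, Real.rpow_natCast]
    ring
  have e0 : ((2:ℝ)^n : ℝ) = 2^((n:ℝ)) := (Real.rpow_natCast 2 n).symm
  rw [e0, e1, A, B, B, A, Cv]
  rw [← Real.rpow_add (by norm_num : (0:ℝ) < 2), ← Real.rpow_add (by norm_num : (0:ℝ) < 2),
    ← Real.rpow_add (by norm_num : (0:ℝ) < 2)]
  rw [B, ← Real.rpow_add (by norm_num : (0:ℝ) < 2)]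
  congr 1
  push_cast
  ring

theorem stmt10 (d : ℕ) (hd : 1 ≤ d) (α β : ℝ) (hα : 0 ≤ α) (hβ : 0 ≤ β)
    (hsum : (d : ℝ) + 2 < α + β) :
    ∃ N : ℝ, 0 < N ∧ ∀ f : Pt d → ℝ, Measurable f → (∀ z, 0 ≤ f z) →
      (∫⁻ z : Pt d, ENNReal.ofReal (f z * min (prho z ^ (-α)) 1)) ≤
        ENNReal.ofReal N * maxF β f (0, 0) := by
  haveI : Nonempty (Fin d) := ⟨⟨0, by omega⟩⟩
  set Bd : ℝ≥0∞ := volume (ball (0:Spc d) 1) with hBd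
  have hBdt : Bd ≠ ⊤ := measure_ball_lt_top.ne
  set e : ℝ := (d:ℝ) + 2 - α - β with he
  have hee : e < 0 := by rw [he]; linarith
  have hq1 : (2:ℝ)^e < 1 := Real.rpow_lt_one_of_one_lt_of_neg one_lt_two hee
  set q : ℝ≥0∞ := ENNReal.ofReal ((2:ℝ)^e) with hqdef
  have hqlt : q < 1 := by
    rw [hqdef, ← ENNReal.ofReal_one]
    exact ENNReal.ofReal_lt_ofReal_iff_of_nonneg (by positivity) |>.mpr hq1
  set K : ℝ := (2:ℝ)^((4:ℝ) + 2*(d:ℝ) - 2*β) with hK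
  set G : ℝ≥0∞ := ENNReal.ofReal K * (1 - q)⁻¹ * Bd with hG
  have h1q : (1 - q) ≠ 0 := by
    rw [Ne, tsub_eq_zero_iff_le]
    exact not_le.mpr hqlt
  have hGt : G ≠ ⊤ := by
    refine ENNReal.mul_ne_top (ENNReal.mul_ne_top ENNReal.ofReal_ne_top ?_) hBdt
    exact ENNReal.inv_ne_top.mpr h1q
  refine ⟨G.toReal + 1, by positivity, ?_⟩
  intro f hf hf0
  set M := maxF β f ((0,0) : Pt d) with hM
  have step : ∀ n : ℕ,
      (∫⁻ z : Pt d, ENNReal.ofReal (((2:ℝ)^n) ^ (-α)) *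
        Set.indicator {w : Pt d | prho w < 2^(n+1)} (fun w => ENNReal.ofReal (f w)) z)
        ≤ (ENNReal.ofReal K * q^n) * Bd * M := by
    intro n
    have hr : (0:ℝ) < 2^(n+1) := by positivity
    rw [lintegral_const_mul _ ((hf.ennreal_ofReal).indicator (measurableSet_S _)),
      lintegral_indicator (measurableSet_S _) _]
    calc ENNReal.ofReal (((2:ℝ)^n)^(-α)) *
          ∫⁻ z in {w : Pt d | prho w < 2^(n+1)}, ENNReal.ofReal (f z)
        ≤ ENNReal.ofReal (((2:ℝ)^n)^(-α)) *
          (ENNReal.ofReal ((2*(2:ℝ)^(n+1))^2 * (2*(2:ℝ)^(n+1))^d *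
            (((2*(2:ℝ)^(n+1)) ^ β)⁻¹)) * Bd * M) :=
        mul_le_mul_right (keyA hd β f hr) _
      _ = (ENNReal.ofReal K * q^n) * Bd * M := by
        rw [← mul_assoc, ← mul_assoc, ← ENNReal.ofReal_mul (by positivity), realg d α β n,
          ENNReal.ofReal_mul (by positivity), ENNReal.ofReal_pow (by positivity)]
  calc ∫⁻ z : Pt d, ENNReal.ofReal (f z * min (prho z ^ (-α)) 1)
      ≤ ∫⁻ z : Pt d, ∑' n : ℕ, ENNReal.ofReal (((2:ℝ)^n) ^ (-α)) *
          Set.indicator {w : Pt d | prho w < 2^(n+1)} (fun w => ENNReal.ofReal (f w)) z :=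
        lintegral_mono (pointwise hα f hf0)
    _ = ∑' n : ℕ, ∫⁻ z : Pt d, ENNReal.ofReal (((2:ℝ)^n) ^ (-α)) *
          Set.indicator {w : Pt d | prho w < 2^(n+1)} (fun w => ENNReal.ofReal (f w)) z :=
        lintegral_tsum (fun n =>
          (((hf.ennreal_ofReal).indicator (measurableSet_S _)).const_mul _).aemeasurable)
    _ ≤ ∑' n : ℕ, (ENNReal.ofReal K * q^n) * Bd * M := ENNReal.tsum_le_tsum step
    _ = ENNReal.ofReal K * (1-q)⁻¹ * Bd * M := by
        rw [ENNReal.tsum_mul_right, ENNReal.tsum_mul_right, ENNReal.tsum_mul_left,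
          ENNReal.tsum_geometric]
    _ ≤ ENNReal.ofReal (G.toReal + 1) * M := by
        refine mul_le_mul_left ?_ M
        exact le_trans (le_of_eq (ENNReal.ofReal_toReal hGt).symm)
          (ENNReal.ofReal_le_ofReal (le_add_of_nonneg_right zero_le_one))
end
end
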